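/- Let H = H_X × H_Z be a subsystem CSS code in G × G with H ≠ H + H^ω. Define d^{H_X} to be the minimum Hamming weight of an element of (H_X + H_Z^θ) \ H_X, and d^{H_Z} the minimum Hamming weight of an element of (H_Z + H_X^θ) \ H_Z (both sets are nonempty). Then the minimum symplectic weight of an element of (H + H^ω) \ H equals min{d^{H_X}, d^{H_Z}}. -/

import Mathlib

open Finset

/-- Orthogonal complement of a submodule with respect to a bilinear form:
`ortho ξ H = {v | ξ(v,h) = 0 for all h ∈ H}`. -/
def ortho {K V : Type*} [CommSemiring K] [AddCommMonoid V] [Module K V]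
    (ξ : V →ₗ[K] V →ₗ[K] K) (H : Submodule K V) : Submodule K V :=
  ⨅ h ∈ H, LinearMap.ker (ξ.flip h)

/-- The dot product `θ(a,b) = ∑ j, a j * b j` as a bilinear form on `Fin n → ZMod p`. -/
def dotB (p n : ℕ) : (Fin n → ZMod p) →ₗ[ZMod p] (Fin n → ZMod p) →ₗ[ZMod p] ZMod p :=
  LinearMap.mk₂ (ZMod p) (fun a b => ∑ j, a j * b j)
    (fun a a' b => by simp [add_mul, Finset.sum_add_distrib])
    (fun c a b => by simp [Finset.mul_sum, mul_assoc])
    (fun a b b' => by simp [mul_add, Finset.sum_add_distrib])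
    (fun c a b => by simp [Finset.mul_sum, mul_left_comm])

/-- The symmetric form on `V × V` induced by a bilinear form `B` on `V`:
`(v,w) ↦ B v.1 w.1 + B v.2 w.2`. -/
def sumB {K V : Type*} [CommRing K] [AddCommGroup V] [Module K V]
    (B : V →ₗ[K] V →ₗ[K] K) : (V × V) →ₗ[K] (V × V) →ₗ[K] K :=
  LinearMap.mk₂ K (fun v w => B v.1 w.1 + B v.2 w.2)
    (fun v v' w => by simp; ring)
    (fun c v w => by simp; ring)
    (fun v w w' => by simp; ring)
    (fun c v w => by simp; ring)

/-- The symplectic form on `V × V` induced by a symmetric bilinear form `B` on `V`: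
`(v,w) ↦ B v.2 w.1 - B v.1 w.2`. -/
def sympB {K V : Type*} [CommRing K] [AddCommGroup V] [Module K V]
    (B : V →ₗ[K] V →ₗ[K] K) : (V × V) →ₗ[K] (V × V) →ₗ[K] K :=
  LinearMap.mk₂ K (fun v w => B v.2 w.1 - B v.1 w.2)
    (fun v v' w => by simp; ring)
    (fun c v w => by simp; ring)
    (fun v w w' => by simp; ring)
    (fun c v w => by simp; ring)

/-- Hamming weight of a vector in `Fin n → ZMod p`. -/
def hwt {p n : ℕ} (a : Fin n → ZMod p) : ℕ :=
  (Finset.univ.filter fun j => a j ≠ 0).card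

/-- Symplectic weight of a vector in `(Fin n → ZMod p) × (Fin n → ZMod p)`. -/
def swt {p n : ℕ} (v : (Fin n → ZMod p) × (Fin n → ZMod p)) : ℕ :=
  (Finset.univ.filter fun j => ¬(v.1 j = 0 ∧ v.2 j = 0)).card

/-!
The symplectic complement of `H_X × H_Z` is `H_Z^θ × H_X^θ`, so `H + H^ω` is the product
`(H_X + H_Z^θ) × (H_Z + H_X^θ)`. Since `θ` is nondegenerate, `S ↦ S^θ` is an antitone involution,
whence `H_Z^θ ≤ H_X ↔ H_X^θ ≤ H_Z`: one factor grows exactly when the other does, so both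
classical sets are nonempty. A vector `(a, b)` of the product outside `H_X × H_Z` has `a ∉ H_X` or
`b ∉ H_Z`, and its symplectic weight dominates the Hamming weight of each component; conversely
`(a, 0)` and `(0, b)` realize the two classical minima.
-/

section Orthogonal

variable {K V : Type*}

lemma mem_ortho [CommSemiring K] [AddCommMonoid V] [Module K V]
    (ξ : V →ₗ[K] V →ₗ[K] K) (H : Submodule K V) (v : V) :
    v ∈ ortho ξ H ↔ ∀ h ∈ H, ξ v h = 0 := by
  simp [ortho]

lemma ortho_antitone [CommSemiring K] [AddCommMonoid V] [Module K V]
    (ξ : V →ₗ[K] V →ₗ[K] K) : Antitone (ortho ξ) := fun _ _ hST v hv => by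
  rw [mem_ortho] at hv ⊢
  exact fun s hs => hv s (hST hs)

lemma ortho_eq_orthogonal_flip [CommRing K] [AddCommGroup V] [Module K V]
    (B : LinearMap.BilinForm K V) (H : Submodule K V) :
    ortho B H = B.flip.orthogonal H := by
  ext v
  simp [mem_ortho]

variable [Field K] [AddCommGroup V] [Module K V] [FiniteDimensional K V]
  {B : LinearMap.BilinForm K V}

lemma ortho_ortho (hB : B.Nondegenerate) (hB₀ : B.IsRefl) (H : Submodule K V) :
    ortho B (ortho B H) = H := by
  rw [ortho_eq_orthogonal_flip, ortho_eq_orthogonal_flip]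
  exact LinearMap.BilinForm.orthogonal_orthogonal hB.flip (fun x y h => hB₀ y x h) H

lemma ortho_le_comm (hB : B.Nondegenerate) (hB₀ : B.IsRefl) {S T : Submodule K V} :
    ortho B S ≤ T ↔ ortho B T ≤ S := by
  have key {S T : Submodule K V} (h : ortho B S ≤ T) : ortho B T ≤ S := by
    simpa only [ortho_ortho hB hB₀] using ortho_antitone B h
  exact ⟨key, key⟩

end Orthogonal

lemma ortho_sympB_prod {K V : Type*} [CommRing K] [AddCommGroup V] [Module K V]
    (B : V →ₗ[K] V →ₗ[K] K) (S T : Submodule K V) :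
    ortho (sympB B) (S.prod T) = (ortho B T).prod (ortho B S) := by
  ext ⟨a, b⟩
  simp only [mem_ortho, Submodule.mem_prod]
  constructor
  · intro h
    refine ⟨fun d hd => ?_, fun c hc => ?_⟩
    · simpa [sympB] using h (0, d) ⟨S.zero_mem, hd⟩
    · simpa [sympB] using h (c, 0) ⟨hc, T.zero_mem⟩
  · rintro ⟨ha, hb⟩ ⟨c, d⟩ ⟨hc, hd⟩
    simp [sympB, hb c hc, ha d hd]

lemma dotB_isSymm (p n : ℕ) : (dotB p n).IsSymm :=
  LinearMap.isSymm_def.mpr fun a b => by simp [dotB, mul_comm]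

lemma dotB_nondegenerate (p n : ℕ) : (dotB p n).Nondegenerate := by
  refine ((dotB_isSymm p n).isRefl.nondegenerate_iff_separatingLeft).mpr fun a h => ?_
  funext j
  simpa [dotB, Pi.single_apply] using h (Pi.single j 1)

section Weight

variable {p n : ℕ}

lemma swt_mk_zero_right (a : Fin n → ZMod p) : swt (a, (0 : Fin n → ZMod p)) = hwt a := by
  simp [swt, hwt]

lemma swt_mk_zero_left (b : Fin n → ZMod p) : swt ((0 : Fin n → ZMod p), b) = hwt b := by
  simp [swt, hwt]

lemma hwt_fst_le_swt (v : (Fin n → ZMod p) × (Fin n → ZMod p)) : hwt v.1 ≤ swt v :=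
  Finset.card_le_card fun j => by simp +contextual

lemma hwt_snd_le_swt (v : (Fin n → ZMod p) × (Fin n → ZMod p)) : hwt v.2 ≤ swt v :=
  Finset.card_le_card fun j => by simp +contextual

variable {HX HZ A B : Submodule (ZMod p) (Fin n → ZMod p)}

lemma min_sInf_hwt_le_swt {v : (Fin n → ZMod p) × (Fin n → ZMod p)}
    (hv : v ∈ A.prod B) (hvH : v ∉ HX.prod HZ) :
    min (sInf {w | ∃ a, a ∈ A ∧ a ∉ HX ∧ hwt a = w})
        (sInf {w | ∃ b, b ∈ B ∧ b ∉ HZ ∧ hwt b = w}) ≤ swt v := by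
  by_cases h1 : v.1 ∈ HX
  · have h2 : v.2 ∉ HZ := fun h2 => hvH ⟨h1, h2⟩
    calc _ ≤ sInf {w | ∃ b, b ∈ B ∧ b ∉ HZ ∧ hwt b = w} := min_le_right _ _
      _ ≤ hwt v.2 := Nat.sInf_le ⟨v.2, hv.2, h2, rfl⟩
      _ ≤ swt v := hwt_snd_le_swt v
  · calc _ ≤ sInf {w | ∃ a, a ∈ A ∧ a ∉ HX ∧ hwt a = w} := min_le_left _ _
      _ ≤ hwt v.1 := Nat.sInf_le ⟨v.1, hv.1, h1, rfl⟩
      _ ≤ swt v := hwt_fst_le_swt v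

lemma sInf_swt_prod_diff (hA : ∃ a, a ∈ A ∧ a ∉ HX) (hB : ∃ b, b ∈ B ∧ b ∉ HZ) :
    sInf {w | ∃ v, v ∈ A.prod B ∧ v ∉ HX.prod HZ ∧ swt v = w}
      = min (sInf {w | ∃ a, a ∈ A ∧ a ∉ HX ∧ hwt a = w})
            (sInf {w | ∃ b, b ∈ B ∧ b ∉ HZ ∧ hwt b = w}) := by
  obtain ⟨a, haA, haX⟩ := hA
  obtain ⟨b, hbB, hbZ⟩ := hB
  refine le_antisymm (le_min ?_ ?_) ?_
  · refine le_csInf ⟨_, a, haA, haX, rfl⟩ ?_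
    rintro _ ⟨a, haA, haX, rfl⟩
    exact Nat.sInf_le ⟨(a, 0), ⟨haA, B.zero_mem⟩, fun h => haX h.1, swt_mk_zero_right a⟩
  · refine le_csInf ⟨_, b, hbB, hbZ, rfl⟩ ?_
    rintro _ ⟨b, hbB, hbZ, rfl⟩
    exact Nat.sInf_le ⟨(0, b), ⟨A.zero_mem, hbB⟩, fun h => hbZ h.2, swt_mk_zero_left b⟩
  · refine le_csInf ⟨_, (a, 0), ⟨haA, B.zero_mem⟩, fun h => haX h.1, rfl⟩ ?_
    rintro _ ⟨v, hv, hvH, rfl⟩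
    exact min_sInf_hwt_le_swt hv hvH

end Weight

/-- for a subsystem CSS code `H = H_X × H_Z` with `H ≠ H ⊔ H^ω`, the sets
`(H_X ⊔ H_Z^θ) \ H_X` and `(H_Z ⊔ H_X^θ) \ H_Z` are nonempty, and the minimum symplectic
weight over `(H ⊔ H^ω) \ H` equals `min d^{H_X} d^{H_Z}`, the minimum Hamming weights over
the two classical sets. -/
theorem stmt3 (p n : ℕ) [Fact p.Prime]
    (HX HZ : Submodule (ZMod p) (Fin n → ZMod p))
    (hne : HX.prod HZ ≠ HX.prod HZ ⊔ ortho (sympB (dotB p n)) (HX.prod HZ)) :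
    (∃ a, a ∈ HX ⊔ ortho (dotB p n) HZ ∧ a ∉ HX) ∧
    (∃ b, b ∈ HZ ⊔ ortho (dotB p n) HX ∧ b ∉ HZ) ∧
    sInf {w | ∃ v, v ∈ HX.prod HZ ⊔ ortho (sympB (dotB p n)) (HX.prod HZ) ∧
        v ∉ HX.prod HZ ∧ swt v = w}
      = min (sInf {w | ∃ a, a ∈ HX ⊔ ortho (dotB p n) HZ ∧ a ∉ HX ∧ hwt a = w})
            (sInf {w | ∃ b, b ∈ HZ ⊔ ortho (dotB p n) HX ∧ b ∉ HZ ∧ hwt b = w}) := by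
  have hsup : HX.prod HZ ⊔ ortho (sympB (dotB p n)) (HX.prod HZ)
      = (HX ⊔ ortho (dotB p n) HZ).prod (HZ ⊔ ortho (dotB p n) HX) := by
    rw [ortho_sympB_prod, Submodule.prod_sup_prod]
  have hdual : HX ⊔ ortho (dotB p n) HZ = HX ↔ HZ ⊔ ortho (dotB p n) HX = HZ := by
    simp only [sup_eq_left]
    exact ortho_le_comm (dotB_nondegenerate p n) (dotB_isSymm p n).isRefl
  have hX : HX ⊔ ortho (dotB p n) HZ ≠ HX := fun h => hne (by rw [hsup, h, hdual.mp h])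
  have hZ : HZ ⊔ ortho (dotB p n) HX ≠ HZ := hdual.not.mp hX
  obtain ⟨a, haA, haX⟩ := SetLike.exists_of_lt (le_sup_left.lt_of_ne' hX)
  obtain ⟨b, hbB, hbZ⟩ := SetLike.exists_of_lt (le_sup_left.lt_of_ne' hZ)
  rw [hsup]
  exact ⟨⟨a, haA, haX⟩, ⟨b, hbB, hbZ⟩, sInf_swt_prod_diff ⟨a, haA, haX⟩ ⟨b, hbB, hbZ⟩⟩
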